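/- arXiv:2006.01678 — 4 statements merged into one kernel-verified Lean document; each statement's English description precedes it below -/
import Mathlib

section
/- Let X be a bipartite graph with bipartition parts P and Q that has at least one edge, contains no induced cycle of length at least 6, and is biregular with respect to (P,Q). Then there exist integers a,b ≥ 1 such that every connected component C of X satisfies |C∩P| = a, |C∩Q| = b, and every vertex of C∩P is adjacent to every vertex of C∩Q; that is, X is a disjoint union of m copies of the complete bipartite graph K_{a,b}, where m is the number of connected components of X. -/
/-!
In a bipartite graph, a non-adjacent pair `u ∈ P`, `v ∈ Q` of one component is at odd distance
at least `3`, so a shortest path between them starts with an induced path `x₀ x₁ x₂ x₃`.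
Biregularity extends any induced path `x₀ … x_k` with `k ≥ 3`: `x_{k-2}` and `x_k` have the same
degree and `x_{k-3}` is adjacent to the first only, so `x_k` has a neighbour `w` not adjacent to
`x_{k-2}`. If `w` were adjacent to some earlier `x_j`, the last such `j` would close an induced
cycle through `w`, which is even (bipartiteness), not a `4`-cycle (choice of `w`), hence of length at
least `6`. Induced paths would thus grow beyond the number of vertices. So every component is
complete bipartite, and each of its sides is the neighbourhood of a single vertex of the other side,
whose size is the degree of that side.
-/

open SimpleGraph

/-- `P`, `Q` form a bipartition of the graph `X`. -/
def IsBipartition {V : Type*} (X : SimpleGraph V) (P Q : Set V) : Prop :=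
  (∀ v, v ∈ P ∨ v ∈ Q) ∧ Disjoint P Q ∧
    ∀ u v, X.Adj u v → (u ∈ P ∧ v ∈ Q) ∨ (u ∈ Q ∧ v ∈ P)

/-- `X` contains no induced cycle of length at least 6. -/
def NoLongInducedCycle {V : Type*} (X : SimpleGraph V) : Prop :=
  ∀ n : ℕ, 6 ≤ n → IsEmpty (SimpleGraph.cycleGraph n ↪g X)


namespace IsBipartition

variable {V : Type*} {X : SimpleGraph V} {P Q : Set V}

theorem symm (h : IsBipartition X P Q) : IsBipartition X Q P :=
  ⟨fun v => (h.1 v).symm, h.2.1.symm, fun u v huv => (h.2.2 u v huv).symm⟩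

theorem notMem_left_of_mem_right (h : IsBipartition X P Q) {v : V} (hv : v ∈ Q) : v ∉ P :=
  fun hvP => h.2.1.notMem_of_mem_left hvP hv

theorem mem_right_of_notMem_left (h : IsBipartition X P Q) {v : V} (hv : v ∉ P) : v ∈ Q :=
  (h.1 v).resolve_left hv

theorem mem_left_iff_of_adj (h : IsBipartition X P Q) {u v : V} (huv : X.Adj u v) :
    u ∈ P ↔ v ∉ P := by
  rcases h.2.2 u v huv with ⟨hu, hv⟩ | ⟨hu, hv⟩
  · exact iff_of_true hu (h.notMem_left_of_mem_right hv)
  · exact iff_of_false (h.notMem_left_of_mem_right hu) (not_not.2 hv)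

theorem ncard_neighborSet_eq (h : IsBipartition X P Q)
    (hbiregP : ∀ u ∈ P, ∀ v ∈ P, (X.neighborSet u).ncard = (X.neighborSet v).ncard)
    (hbiregQ : ∀ u ∈ Q, ∀ v ∈ Q, (X.neighborSet u).ncard = (X.neighborSet v).ncard)
    {u v : V} (huv : u ∈ P ↔ v ∈ P) : (X.neighborSet u).ncard = (X.neighborSet v).ncard := by
  by_cases hu : u ∈ P
  · exact hbiregP u hu v (huv.1 hu)
  · exact hbiregQ u (h.mem_right_of_notMem_left hu) v
      (h.mem_right_of_notMem_left (mt huv.2 hu))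

theorem exists_mem_left_adj (h : IsBipartition X P Q) (hedge : ∃ u v, X.Adj u v) :
    ∃ p q, p ∈ P ∧ X.Adj p q := by
  obtain ⟨u, v, huv⟩ := hedge
  by_cases hu : u ∈ P
  exacts [⟨u, v, hu, huv⟩, ⟨v, u, not_not.1 (mt (h.mem_left_iff_of_adj huv).2 hu), huv.symm⟩]

theorem even_length_iff (h : IsBipartition X P Q) {u v : V} (p : X.Walk u v) :
    Even p.length ↔ (u ∈ P ↔ v ∈ P) := by
  induction p with
  | nil => simp
  | cons huv p ih =>
    rw [Walk.length_cons, Nat.even_add_one, ih, h.mem_left_iff_of_adj huv]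
    tauto

theorem even_of_cycleGraph_embedding (h : IsBipartition X P Q) {n : ℕ}
    (e : cycleGraph (n + 3) ↪g X) : Even (n + 3) := by
  simpa using (h.even_length_iff ((cycleGraph.cycle n).map e.toHom)).2 Iff.rfl

end IsBipartition

namespace SimpleGraph

theorem cycleGraph_adj_iff_val {n : ℕ} {a b : Fin (n + 2)} :
    (cycleGraph (n + 2)).Adj a b ↔ a.val = b.val + 1 ∨ b.val = a.val + 1 ∨
      (a.val = 0 ∧ b.val = n + 1) ∨ (b.val = 0 ∧ a.val = n + 1) := by
  have hsub : ∀ a b : Fin (n + 2),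
      (a - b).val = 1 ↔ a.val = b.val + 1 ∨ (a.val = 0 ∧ b.val = n + 1) := by
    intro a b
    rcases le_or_gt b a with hba | hab
    · rw [Fin.sub_val_of_le hba]; omega
    · rw [Fin.coe_sub_iff_lt.2 hab]; omega
  rw [cycleGraph_adj', hsub, hsub]
  tauto

theorem exists_adj_not_adj_of_ncard_le {V : Type*} [Finite V] {X : SimpleGraph V} {a b x : V}
    (hax : X.Adj a x) (hbx : ¬ X.Adj b x)
    (hdeg : (X.neighborSet a).ncard ≤ (X.neighborSet b).ncard) :
    ∃ w, X.Adj b w ∧ ¬ X.Adj a w := by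
  by_contra! hsub
  have hlt : X.neighborSet b ⊂ X.neighborSet a := ⟨hsub, fun h => hbx (h hax)⟩
  exact (Set.ncard_lt_ncard hlt).not_ge hdeg

end SimpleGraph

section InducedPath

variable {V : Type*} {X : SimpleGraph V}

/-- `f 0, …, f k` is an induced path with `k` edges; the values of `f` beyond `k` play no role. -/
def IsInducedPath (X : SimpleGraph V) (f : ℕ → V) (k : ℕ) : Prop :=
  Set.InjOn f (Set.Iic k) ∧ ∀ i ≤ k, ∀ j ≤ k, (X.Adj (f i) (f j) ↔ i = j + 1 ∨ j = i + 1)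

namespace IsInducedPath

variable {f : ℕ → V} {k : ℕ}

theorem adj_succ (hf : IsInducedPath X f k) {i : ℕ} (hi : i < k) : X.Adj (f i) (f (i + 1)) :=
  (hf.2 i hi.le (i + 1) hi).2 (by omega)

theorem mono (hf : IsInducedPath X f k) {m : ℕ} (hm : m ≤ k) : IsInducedPath X f m :=
  ⟨hf.1.mono (Set.Iic_subset_Iic.2 hm), fun i hi j hj => hf.2 i (hi.trans hm) j (hj.trans hm)⟩

theorem shift (hf : IsInducedPath X f k) {j : ℕ} (hj : j ≤ k) :
    IsInducedPath X (fun i => f (j + i)) (k - j) :=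
  ⟨fun a (ha : a ≤ k - j) b (hb : b ≤ k - j) hab => by
    have := hf.1 (show j + a ≤ k by omega) (show j + b ≤ k by omega) hab
    omega,
   fun a ha b hb => by rw [hf.2 (j + a) (by omega) (j + b) (by omega)]; omega⟩

theorem snoc (hf : IsInducedPath X f k) {w : V} (hw : ∀ i ≤ k, f i ≠ w) (hadj : X.Adj (f k) w)
    (hnadj : ∀ i < k, ¬ X.Adj (f i) w) : IsInducedPath X (Function.update f (k + 1) w) (k + 1) := by
  classical
  refine ⟨fun a ha b hb hab => ?_, fun a ha b hb => ?_⟩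
  · simp only [Set.mem_Iic, Function.update_apply] at ha hb hab
    split_ifs at hab with h1 h2 h2
    · omega
    · exact absurd hab.symm (hw b (by omega))
    · exact absurd hab (hw a (by omega))
    · exact hf.1 (show a ≤ k by omega) (show b ≤ k by omega) hab
  · simp only [Function.update_apply]
    split_ifs with h1 h2 h2
    · simp [h1, h2]
    · subst h1
      rw [X.adj_comm]
      by_cases hbk : b = k
      · simpa [hbk] using hadj
      · simp only [hnadj b (by omega), false_iff]
        omega
    · subst h2
      by_cases hak : a = k
      · simpa [hak] using hadj
      · simp only [hnadj a (by omega), false_iff]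
        omega
    · exact hf.2 a (by omega) b (by omega)

theorem add_one_le_card [Finite V] (hf : IsInducedPath X f k) : k + 1 ≤ Nat.card V := by
  have hinj : Function.Injective fun i : Fin (k + 1) => f i :=
    fun a b hab => Fin.ext (hf.1 (show a.val ≤ k by omega) (show b.val ≤ k by omega) hab)
  simpa using Nat.card_le_card_of_injective _ hinj

theorem exists_cycleGraph_embedding {n : ℕ} (hf : IsInducedPath X f (n + 1)) {w : V}
    (hw : ∀ i ≤ n + 1, f i ≠ w) (hadj : ∀ i ≤ n + 1, X.Adj (f i) w ↔ i = 0 ∨ i = n + 1) :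
    Nonempty (cycleGraph (n + 3) ↪g X) := by
  classical
  let c : Fin (n + 3) → V := fun i => if i.val = n + 2 then w else f i
  have hc_adj : ∀ a b, X.Adj (c a) (c b) ↔ (cycleGraph (n + 3)).Adj a b := by
    intro a b
    have ha := a.isLt
    have hb := b.isLt
    rw [cycleGraph_adj_iff_val]
    simp only [c]
    split_ifs with h1 h2 h2
    · simp only [X.irrefl, false_iff]; omega
    · rw [X.adj_comm, hadj b (by omega)]; omega
    · rw [hadj a (by omega)]; omega
    · rw [hf.2 a (by omega) b (by omega)]; omega
  refine ⟨⟨⟨c, fun a b hab => ?_⟩, fun {a b} => hc_adj a b⟩⟩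
  have ha := a.isLt
  have hb := b.isLt
  simp only [c] at hab
  split_ifs at hab with h1 h2 h2
  · exact Fin.ext (by omega)
  · exact absurd hab.symm (hw b (by omega))
  · exact absurd hab (hw a (by omega))
  · exact Fin.ext (hf.1 (show a.val ≤ n + 1 by omega) (show b.val ≤ n + 1 by omega) hab)

end IsInducedPath

end InducedPath

namespace SimpleGraph.Walk

variable {V : Type*} {X : SimpleGraph V} {u v : V}

theorem dist_getVert_of_length_eq_dist (p : X.Walk u v) (hp : p.length = X.dist u v) {i : ℕ}
    (hi : i ≤ p.length) : X.dist u (p.getVert i) = i := by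
  have h₁ : X.dist u (p.getVert i) ≤ i := by
    simpa [Walk.take_length, hi] using X.dist_le (p.take i)
  have h₂ : X.dist (p.getVert i) v ≤ p.length - i := by
    simpa [Walk.drop_length] using X.dist_le (p.drop i)
  have h₃ := Reachable.dist_triangle_left ⟨p.take i⟩ v
  omega

theorem isInducedPath_getVert (p : X.Walk u v) (hp : p.length = X.dist u v) :
    IsInducedPath X p.getVert p.length := by
  have hdist := fun i (hi : i ≤ p.length) => p.dist_getVert_of_length_eq_dist hp hi
  refine ⟨fun i hi j hj hij => ?_, fun i hi j hj => ⟨fun hadj => ?_, ?_⟩⟩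
  · rw [← hdist i hi, ← hdist j hj, hij]
  · have hne : i ≠ j := by rintro rfl; exact X.irrefl hadj
    have := hadj.diff_dist_adj (u := u)
    rw [hdist i hi, hdist j hj] at this
    omega
  · rintro (rfl | rfl)
    · exact (p.adj_getVert_succ (by omega)).symm
    · exact p.adj_getVert_succ (by omega)

end SimpleGraph.Walk

section Biregular

variable {V : Type*} [Finite V] {X : SimpleGraph V} {P Q : Set V}

theorem IsInducedPath.exists_extend (hbip : IsBipartition X P Q) (hX : NoLongInducedCycle X)
    {f : ℕ → V} {k : ℕ} (hf : IsInducedPath X f (k + 3))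
    (hdeg : (X.neighborSet (f (k + 1))).ncard ≤ (X.neighborSet (f (k + 3))).ncard) :
    ∃ g, IsInducedPath X g (k + 4) := by
  classical
  obtain ⟨w, hw, hnw⟩ := exists_adj_not_adj_of_ncard_le (hf.adj_succ (i := k) (by omega)).symm
    (fun h => by have := (hf.2 (k + 3) le_rfl k (by omega)).1 h; omega) hdeg
  have hne : ∀ i ≤ k + 3, f i ≠ w := by
    rintro i hi rfl
    obtain rfl : i = k + 2 := by have := (hf.2 (k + 3) le_rfl i hi).1 hw; omega
    exact hnw (hf.adj_succ (by omega))
  have hfar : ∀ i < k + 3, ¬ X.Adj (f i) w := by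
    intro i hi hiw
    set j := Nat.findGreatest (fun i => X.Adj (f i) w) (k + 2)
    have hj : X.Adj (f j) w := Nat.findGreatest_spec (P := fun i => X.Adj (f i) w) (by omega) hiw
    have hjk : j ≤ k + 2 := Nat.findGreatest_le _
    have hjn : j ≠ k + 1 := fun h => hnw (h ▸ hj)
    obtain ⟨n, hn⟩ : ∃ n, k + 3 - j = n + 1 := ⟨k + 2 - j, by omega⟩
    obtain ⟨e⟩ := (hn ▸ hf.shift (j := j) (by omega)).exists_cycleGraph_embedding
      (fun i hi => hne _ (by omega)) fun i hi => by
        refine ⟨fun h => ?_, ?_⟩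
        · by_contra hi'
          exact Nat.findGreatest_is_greatest (show j < j + i by omega) (by omega) h
        · rintro (rfl | rfl)
          · simpa using hj
          · simpa [show j + (n + 1) = k + 3 by omega] using hw
    have hshort : n + 3 < 6 := by
      by_contra! hlong
      exact (hX _ hlong).false e
    obtain ⟨r, hr⟩ := hbip.even_of_cycleGraph_embedding e
    -- an even cycle shorter than `6` is a `4`-cycle, i.e. `j = k + 1`
    omega
  exact ⟨_, hf.snoc hne hw hfar⟩

theorem not_isInducedPath_three (hbip : IsBipartition X P Q) (hX : NoLongInducedCycle X)
    (hdeg : ∀ u v, (u ∈ P ↔ v ∈ P) → (X.neighborSet u).ncard = (X.neighborSet v).ncard)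
    (f : ℕ → V) : ¬ IsInducedPath X f 3 := by
  intro hf
  have hgrow : ∀ t, ∃ g, IsInducedPath X g (t + 3) := by
    intro t
    induction t with
    | zero => exact ⟨f, hf⟩
    | succ t ih =>
      obtain ⟨g, hg⟩ := ih
      have h₁ := hbip.mem_left_iff_of_adj (hg.adj_succ (i := t + 1) (by omega))
      have h₂ := hbip.mem_left_iff_of_adj (hg.adj_succ (i := t + 2) (by omega))
      exact hg.exists_extend hbip hX (hdeg _ _ (by tauto)).le
  obtain ⟨g, hg⟩ := hgrow (Nat.card V)
  have := hg.add_one_le_card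
  omega

end Biregular

namespace IsBipartition

variable {V : Type*} {X : SimpleGraph V} {P Q : Set V}

theorem adj_of_mem_supp (hbip : IsBipartition X P Q) (hpath : ∀ f, ¬ IsInducedPath X f 3)
    {C : X.ConnectedComponent} {u v : V} (hu : u ∈ C.supp ∩ P) (hv : v ∈ C.supp ∩ Q) :
    X.Adj u v := by
  obtain ⟨p, hp⟩ := (C.reachable_of_mem_supp hu.1 hv.1).exists_walk_length_eq_dist
  have hodd : ¬ Even p.length := by
    rw [hbip.even_length_iff]
    exact fun h => hbip.notMem_left_of_mem_right hv.2 (h.1 hu.2)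
  have hshort : p.length < 3 := by
    by_contra! hlong
    exact hpath _ ((p.isInducedPath_getVert hp).mono hlong)
  have hone : p.length = 1 := by
    rcases Nat.even_or_odd' p.length with ⟨r, hr | hr⟩
    · exact absurd ⟨r, by omega⟩ hodd
    · omega
  exact dist_eq_one_iff_adj.1 (hp ▸ hone)

theorem supp_inter_nonempty (hbip : IsBipartition X P Q) (hnoiso : ∀ v, ∃ w, X.Adj v w)
    (C : X.ConnectedComponent) : (C.supp ∩ P).Nonempty := by
  obtain ⟨x, rfl⟩ := C.exists_rep
  rcases hbip.1 x with hx | hx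
  · exact ⟨x, rfl, hx⟩
  · obtain ⟨y, hxy⟩ := hnoiso x
    refine ⟨y, (ConnectedComponent.mem_supp_congr_adj _ hxy).1 rfl, ?_⟩
    simpa [hbip.notMem_left_of_mem_right hx] using hbip.mem_left_iff_of_adj hxy

theorem supp_inter_eq_neighborSet (hbip : IsBipartition X P Q) {C : X.ConnectedComponent} {p : V}
    (hp : p ∈ C.supp ∩ P) (hadj : ∀ v ∈ C.supp ∩ Q, X.Adj p v) :
    C.supp ∩ Q = X.neighborSet p := by
  ext v
  refine ⟨hadj v, fun hpv => ⟨C.mem_supp_of_adj_mem_supp hp.1 hpv, ?_⟩⟩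
  exact hbip.mem_right_of_notMem_left ((hbip.mem_left_iff_of_adj hpv).1 hp.2)

end IsBipartition

theorem stmt_0 {V : Type*} [Fintype V] (X : SimpleGraph V) (P Q : Set V)
    (hbip : IsBipartition X P Q)
    (hedge : ∃ u v, X.Adj u v)
    (hchordal : NoLongInducedCycle X)
    (hbiregP : ∀ u ∈ P, ∀ v ∈ P, (X.neighborSet u).ncard = (X.neighborSet v).ncard)
    (hbiregQ : ∀ u ∈ Q, ∀ v ∈ Q, (X.neighborSet u).ncard = (X.neighborSet v).ncard) :
    ∃ a b : ℕ, 1 ≤ a ∧ 1 ≤ b ∧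
      ∀ C : X.ConnectedComponent,
        (C.supp ∩ P).ncard = a ∧ (C.supp ∩ Q).ncard = b ∧
        ∀ u ∈ C.supp ∩ P, ∀ v ∈ C.supp ∩ Q, X.Adj u v := by
  have hdeg := fun u v => hbip.ncard_neighborSet_eq hbiregP hbiregQ (u := u) (v := v)
  have hcomplete : ∀ C : X.ConnectedComponent, ∀ u ∈ C.supp ∩ P, ∀ v ∈ C.supp ∩ Q, X.Adj u v :=
    fun _ _ hu _ hv => hbip.adj_of_mem_supp (not_isInducedPath_three hbip hchordal hdeg) hu hv
  obtain ⟨p₀, q₀, hp₀, hpq₀⟩ := hbip.exists_mem_left_adj hedge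
  have hq₀ : q₀ ∉ P := (hbip.mem_left_iff_of_adj hpq₀).1 hp₀
  have hpos : ∀ v, 0 < (X.neighborSet v).ncard := by
    intro v
    by_cases hv : v ∈ P
    · exact hdeg v p₀ (iff_of_true hv hp₀) ▸ (Set.ncard_pos (Set.toFinite _)).2 ⟨q₀, hpq₀⟩
    · exact hdeg v q₀ (iff_of_false hv hq₀) ▸ (Set.ncard_pos (Set.toFinite _)).2 ⟨p₀, hpq₀.symm⟩
  have hnoiso : ∀ v, ∃ w, X.Adj v w := fun v => (Set.ncard_pos (Set.toFinite _)).1 (hpos v)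
  refine ⟨_, _, hpos q₀, hpos p₀, fun C => ⟨?_, ?_, hcomplete C⟩⟩
  · obtain ⟨q, hq⟩ := hbip.symm.supp_inter_nonempty hnoiso C
    rw [hbip.symm.supp_inter_eq_neighborSet hq fun u hu => (hcomplete C u hu q hq).symm]
    exact hdeg q q₀ (iff_of_false (hbip.notMem_left_of_mem_right hq.2) hq₀)
  · obtain ⟨p, hp⟩ := hbip.supp_inter_nonempty hnoiso C
    rw [hbip.supp_inter_eq_neighborSet hp (hcomplete C p hp)]
    exact hdeg p p₀ (iff_of_true hp.2 hp₀)
end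

section
/- Let X be a bipartite graph with bipartition parts P and Q that has at least one edge, contains no induced cycle of length at least 6, and is biregular with respect to (P,Q). Suppose α ∈ P and β ∈ Q are adjacent bisimplicial vertices. Then the connected component of X containing α has vertex set N(α) ∪ N(β) (where N denotes the neighborhood), and this component is complete bipartite: every vertex of N(β) is adjacent to every vertex of N(α). -/
open SimpleGraph

/-!
Biregularity upgrades the inclusions `N(α) ⊆ N(u)` for `u ∈ N(β)` and `N(β) ⊆ N(v)` for
`v ∈ N(α)`, which bisimpliciality provides, to equalities. Hence `N(α) ∪ N(β)` is closed under
taking neighbours, so it is the whole component of `α`, and bisimpliciality makes it complete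
bipartite.
-/

namespace IsBipartition

variable {V : Type*} {X : SimpleGraph V} {P Q : Set V}

theorem mem_right_of_adj (h : IsBipartition X P Q) {u v : V} (hu : u ∈ P) (huv : X.Adj u v) :
    v ∈ Q := by
  rcases h.2.2 u v huv with ⟨-, hv⟩ | ⟨hu', -⟩
  · exact hv
  · exact absurd hu' (Set.disjoint_left.mp h.2.1 hu)

end IsBipartition

namespace SimpleGraph

variable {V : Type*} {X : SimpleGraph V}

theorem neighborSet_eq_of_forall_adj [Finite V] {P : Set V}
    (hreg : ∀ u ∈ P, ∀ v ∈ P, (X.neighborSet u).ncard = (X.neighborSet v).ncard)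
    {a u : V} (ha : a ∈ P) (hu : u ∈ P) (hadj : ∀ w ∈ X.neighborSet a, X.Adj u w) :
    X.neighborSet u = X.neighborSet a :=
  (Set.eq_of_subset_of_ncard_le hadj (hreg u hu a ha).le).symm

theorem Reachable.mem_of_forall_adj_mem {S : Set V} (hS : ∀ u ∈ S, ∀ w, X.Adj u w → w ∈ S)
    {u v : V} (huv : X.Reachable u v) (hu : u ∈ S) : v ∈ S := by
  obtain ⟨p⟩ := huv
  induction p with
  | nil => exact hu
  | cons h _ ih => exact ih (hS _ hu _ h)

theorem ConnectedComponent.supp_subset_of_forall_adj_mem {S : Set V}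
    (hS : ∀ u ∈ S, ∀ w, X.Adj u w → w ∈ S) {v : V} (hv : v ∈ S) :
    (X.connectedComponentMk v).supp ⊆ S := fun _ hw =>
  (ConnectedComponent.exact hw).symm.mem_of_forall_adj_mem hS hv

end SimpleGraph

theorem stmt_1_general {V : Type*} [Fintype V] (X : SimpleGraph V) (P Q : Set V)
    (hbip : IsBipartition X P Q)
    (hbiregP : ∀ u ∈ P, ∀ v ∈ P, (X.neighborSet u).ncard = (X.neighborSet v).ncard)
    (hbiregQ : ∀ u ∈ Q, ∀ v ∈ Q, (X.neighborSet u).ncard = (X.neighborSet v).ncard)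
    (α β : V) (hα : α ∈ P) (hβ : β ∈ Q) (hadj : X.Adj α β)
    (hbisimp : ∀ u ∈ X.neighborSet α, ∀ v ∈ X.neighborSet β, X.Adj u v) :
    (X.connectedComponentMk α).supp = X.neighborSet α ∪ X.neighborSet β ∧
      ∀ u ∈ X.neighborSet β, ∀ v ∈ X.neighborSet α, X.Adj u v := by
  have hNβ : ∀ u ∈ X.neighborSet β, X.neighborSet u = X.neighborSet α := fun u hu =>
    neighborSet_eq_of_forall_adj hbiregP hα (hbip.symm.mem_right_of_adj hβ hu)
      fun w hw => (hbisimp w hw u hu).symm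
  have hNα : ∀ v ∈ X.neighborSet α, X.neighborSet v = X.neighborSet β := fun v hv =>
    neighborSet_eq_of_forall_adj hbiregQ hβ (hbip.mem_right_of_adj hα hv) (hbisimp v hv)
  have hclosed : ∀ u ∈ X.neighborSet α ∪ X.neighborSet β, ∀ w, X.Adj u w →
      w ∈ X.neighborSet α ∪ X.neighborSet β := by
    rintro u (hu | hu) w huw
    · exact Or.inr (by rwa [← hNα u hu])
    · exact Or.inl (by rwa [← hNβ u hu])
  refine ⟨subset_antisymm ?_ ?_, fun u hu v hv => (hbisimp v hv u hu).symm⟩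
  · exact ConnectedComponent.supp_subset_of_forall_adj_mem hclosed (Or.inr hadj.symm)
  · have hβC : β ∈ (X.connectedComponentMk α).supp :=
      ConnectedComponent.mem_supp_of_adj_mem_supp _ rfl hadj
    rintro w (hw | hw)
    · exact ConnectedComponent.mem_supp_of_adj_mem_supp _ rfl hw
    · exact ConnectedComponent.mem_supp_of_adj_mem_supp _ hβC hw

theorem stmt_1 {V : Type*} [Fintype V] (X : SimpleGraph V) (P Q : Set V)
    (hbip : IsBipartition X P Q)
    (hedge : ∃ u v, X.Adj u v)
    (hchordal : NoLongInducedCycle X)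
    (hbiregP : ∀ u ∈ P, ∀ v ∈ P, (X.neighborSet u).ncard = (X.neighborSet v).ncard)
    (hbiregQ : ∀ u ∈ Q, ∀ v ∈ Q, (X.neighborSet u).ncard = (X.neighborSet v).ncard)
    (α β : V) (hα : α ∈ P) (hβ : β ∈ Q) (hadj : X.Adj α β)
    (hbisimp : ∀ u ∈ X.neighborSet α, ∀ v ∈ X.neighborSet β, X.Adj u v) :
    (X.connectedComponentMk α).supp = X.neighborSet α ∪ X.neighborSet β ∧
      ∀ u ∈ X.neighborSet β, ∀ v ∈ X.neighborSet α, X.Adj u v :=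
  stmt_1_general X P Q hbip hbiregP hbiregQ α β hα hβ hadj hbisimp
end

section
/- Let (Ω,S) be a coherent configuration and X a simple graph with vertex set Ω such that (Ω,S) is compatible with X. Let Δ be a fiber of (Ω,S) and suppose {α} is a singleton fiber of (Ω,S) for some α ∈ Ω. Then the graph distance in X from α to δ (valued in ℕ ∪ {∞}) is the same for all δ ∈ Δ. -/
open SimpleGraph

/-- A coherent configuration on a set `Ω`: a partition `S` of `Ω × Ω` into nonempty
binary relations such that the diagonal is a union of elements of `S`, the converse of
every element of `S` belongs to `S`, and the intersection numbers are well defined. -/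
structure CoherentConfiguration (Ω : Type*) where
  S : Set (Set (Ω × Ω))
  nonempty_mem : ∀ s ∈ S, s.Nonempty
  partition : ∀ p : Ω × Ω, ∃! s, s ∈ S ∧ p ∈ s
  diag_union : ∀ s ∈ S, (∃ p ∈ s, p.1 = p.2) → ∀ p ∈ s, p.1 = p.2
  converse_mem : ∀ s ∈ S, {p : Ω × Ω | (p.2, p.1) ∈ s} ∈ S
  regularity : ∀ r ∈ S, ∀ s ∈ S, ∀ t ∈ S, ∀ p ∈ t, ∀ q ∈ t,
    {γ : Ω | (p.1, γ) ∈ r ∧ (γ, p.2) ∈ s}.ncard =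
      {γ : Ω | (q.1, γ) ∈ r ∧ (γ, q.2) ∈ s}.ncard

/-- `Δ` is a fiber of the coherent configuration, i.e. `{(δ,δ) : δ ∈ Δ} ∈ S`. -/
def CoherentConfiguration.IsFiber {Ω : Type*} (C : CoherentConfiguration Ω)
    (Δ : Set Ω) : Prop :=
  {p : Ω × Ω | p.1 = p.2 ∧ p.1 ∈ Δ} ∈ C.S

/-- The coherent configuration is compatible with the graph `X`: the arc set of `X`
is a union of elements of `S`. -/
def CoherentConfiguration.Compatible {Ω : Type*} (C : CoherentConfiguration Ω)
    (X : SimpleGraph Ω) : Prop :=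
  ∀ s ∈ C.S, (∃ p ∈ s, X.Adj p.1 p.2) → ∀ p ∈ s, X.Adj p.1 p.2

/-- The vertex `α` is distinguished in the coherent configuration: `{(α,α)} ∈ S`. -/
def CoherentConfiguration.Distinguished {Ω : Type*} (C : CoherentConfiguration Ω)
    (α : Ω) : Prop :=
  ({(α, α)} : Set (Ω × Ω)) ∈ C.S

/-- The equivalence relation `e_{Δ,Γ}` on `Δ`: two vertices of `Δ` are equivalent iff
they have the same neighbors in `Γ`; viewed as a set of pairs. -/
def eRel {V : Type*} (X : SimpleGraph V) (Δ Γ : Set V) : Set (V × V) :=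
  {p | p.1 ∈ Δ ∧ p.2 ∈ Δ ∧ X.neighborSet p.1 ∩ Γ = X.neighborSet p.2 ∩ Γ}

/-- The number `‖e_{Δ,Γ}‖` of classes of the equivalence relation `e_{Δ,Γ}`,
i.e. the number of distinct sets of the form `N(δ) ∩ Γ` for `δ ∈ Δ`. -/
noncomputable def numClasses {V : Type*} (X : SimpleGraph V) (Δ Γ : Set V) : ℕ :=
  ((fun δ => X.neighborSet δ ∩ Γ) '' Δ).ncard

/-! Distance in `X` is constant on each basic relation of a compatible coherent configuration:
if `(u, v)` and `(u', v')` lie in one basic relation, the intersection numbers of the relations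
of `(u, b)` and `(b, v)` transport a walk `u - b - ⋯ - v`, step by step, to a walk of the same
length from `u'` to `v'`. For `δ, δ' ∈ Δ` and `s ∋ (α, δ)`, the intersection number of `s*`
and `s` at the fiber `Δ` yields a pair `(γ, δ') ∈ s`, and `γ = α` because every pair of `s`
starts in the fiber `{α}`. -/

namespace CoherentConfiguration

variable {Ω : Type*} [Finite Ω] (C : CoherentConfiguration Ω)

theorem exists_mid_of_mem {r s t : Set (Ω × Ω)} (hr : r ∈ C.S) (hs : s ∈ C.S)
    (ht : t ∈ C.S) {p q : Ω × Ω} (hp : p ∈ t) (hq : q ∈ t)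
    (h : ∃ γ, (p.1, γ) ∈ r ∧ (γ, p.2) ∈ s) :
    ∃ γ, (q.1, γ) ∈ r ∧ (γ, q.2) ∈ s := by
  have hpos : 0 < {γ | (p.1, γ) ∈ r ∧ (γ, p.2) ∈ s}.ncard :=
    (Set.ncard_pos (Set.toFinite _)).mpr h
  rw [C.regularity r hr s hs t ht p hp q hq] at hpos
  exact (Set.ncard_pos (Set.toFinite _)).mp hpos

theorem fst_mem_of_mem {Δ : Set Ω} (hΔ : C.IsFiber Δ) {s : Set (Ω × Ω)} (hs : s ∈ C.S)
    {p q : Ω × Ω} (hp : p ∈ s) (hpΔ : p.1 ∈ Δ) (hq : q ∈ s) : q.1 ∈ Δ := by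
  obtain ⟨γ, ⟨hqγ, hγΔ⟩, -⟩ :=
    C.exists_mid_of_mem hΔ hs hs hp hq ⟨p.1, ⟨rfl, hpΔ⟩, hp⟩
  exact hqγ ▸ hγΔ

theorem edist_le_length_of_mem {X : SimpleGraph Ω} (hX : C.Compatible X) {u v : Ω}
    (w : X.Walk u v) {s : Set (Ω × Ω)} (hs : s ∈ C.S) (huv : (u, v) ∈ s) {u' v' : Ω}
    (huv' : (u', v') ∈ s) : X.edist u' v' ≤ w.length := by
  induction w generalizing s u' v' with
  | nil =>
    have hu'v' : u' = v' := C.diag_union s hs ⟨_, huv, rfl⟩ _ huv'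
    rw [hu'v', edist_self]
    exact zero_le
  | @cons u b v hub q ih =>
    obtain ⟨r₀, ⟨hr₀, hub₀⟩, -⟩ := C.partition (u, b)
    obtain ⟨s₀, ⟨hs₀, hbv₀⟩, -⟩ := C.partition (b, v)
    obtain ⟨b', hub', hbv'⟩ :=
      C.exists_mid_of_mem hr₀ hs₀ hs huv huv' ⟨b, hub₀, hbv₀⟩
    have hadj : X.Adj u' b' := hX r₀ hr₀ ⟨(u, b), hub₀, hub⟩ _ hub'
    calc X.edist u' v' ≤ X.edist u' b' + X.edist b' v' := SimpleGraph.edist_triangle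
      _ ≤ 1 + q.length := add_le_add (edist_eq_one_iff_adj.mpr hadj).le (ih hs₀ hbv₀ hbv')
      _ = (Walk.cons hub q).length := by
          rw [Walk.length_cons, Nat.cast_add, Nat.cast_one, add_comm]

theorem edist_eq_of_mem {X : SimpleGraph Ω} (hX : C.Compatible X) {s : Set (Ω × Ω)}
    (hs : s ∈ C.S) {p q : Ω × Ω} (hp : p ∈ s) (hq : q ∈ s) :
    X.edist p.1 p.2 = X.edist q.1 q.2 := by
  have hle : ∀ {p q : Ω × Ω}, p ∈ s → q ∈ s → X.edist q.1 q.2 ≤ X.edist p.1 p.2 := by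
    intro p q hp hq
    by_cases htop : X.edist p.1 p.2 = ⊤
    · exact htop ▸ le_top
    obtain ⟨w, hw⟩ := exists_walk_of_edist_ne_top htop
    exact hw ▸ C.edist_le_length_of_mem hX w hs hp hq
  exact le_antisymm (hle hq hp) (hle hp hq)

end CoherentConfiguration

theorem stmt_3 {Ω : Type*} [Fintype Ω] (C : CoherentConfiguration Ω) (X : SimpleGraph Ω)
    (hcomp : C.Compatible X) (Δ : Set Ω) (hΔ : C.IsFiber Δ)
    (α : Ω) (hα : C.IsFiber {α}) :
    ∀ δ ∈ Δ, ∀ δ' ∈ Δ, X.edist α δ = X.edist α δ' := by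
  intro δ hδ δ' hδ'
  obtain ⟨s, ⟨hs, hαδ⟩, -⟩ := C.partition (α, δ)
  obtain ⟨γ, -, hγδ'⟩ := C.exists_mid_of_mem (C.converse_mem s hs) hs hΔ
    (p := (δ, δ)) (q := (δ', δ')) ⟨rfl, hδ⟩ ⟨rfl, hδ'⟩ ⟨α, hαδ, hαδ⟩
  have hγ : γ = α := C.fst_mem_of_mem hα hs hαδ rfl hγδ'
  subst hγ
  exact C.edist_eq_of_mem hcomp hs hαδ hγδ'
end

section
/- Let X be a simple graph with vertex set Ω, let α ∈ Ω, and let (Ω,S) be a coherent configuration compatible with X in which α is distinguished. Let Δ, Γ, Λ be fibers of (Ω,S) with Γ and Λ each disjoint from Δ. If e_{Δ,Γ} ⊆ e_{Δ,Λ}, then ‖e_{Δ,Λ}‖ divides ‖e_{Δ,Γ}‖. -/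
open SimpleGraph

/-!
Whether two points of `Δ` have the same neighbours in a fiber `Γ` is decided by three
intersection numbers (common neighbours in `Γ`, and neighbours in `Γ` of each point), so
`e_{Δ,Γ}` is a union of basic relations and, `Δ` being a fiber, all its classes have the same
size `a`; likewise the classes of `e_{Δ,Λ}` have a common size `b`. Each `e_{Δ,Λ}`-class is a
union of `e_{Δ,Γ}`-classes, so `b = k a`, and `|Δ| = ‖e_{Δ,Γ}‖ a = ‖e_{Δ,Λ}‖ k a`.
-/

open Finset in
theorem Finset.card_eq_card_image_mul {ι β : Type*} [DecidableEq β] {D : Finset ι} {f : ι → β}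
    {a : ℕ} (h : ∀ x ∈ D, #{y ∈ D | f y = f x} = a) : #D = #(D.image f) * a := by
  rw [card_eq_sum_card_image f D, ← smul_eq_mul, ← sum_const]
  refine sum_congr rfl fun b hb => ?_
  obtain ⟨x, hx, rfl⟩ := mem_image.mp hb
  exact h x hx

open Finset in
theorem Finset.card_image_dvd_card_image {ι β γ : Type*} [DecidableEq β] [DecidableEq γ]
    {D : Finset ι} {f : ι → β} {g : ι → γ}
    (hfg : ∀ x ∈ D, ∀ y ∈ D, f x = f y → g x = g y)
    (hf : ∀ x ∈ D, ∀ x' ∈ D, #{y ∈ D | f y = f x} = #{y ∈ D | f y = f x'})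
    (hg : ∀ x ∈ D, ∀ x' ∈ D, #{y ∈ D | g y = g x} = #{y ∈ D | g y = g x'}) :
    #(D.image g) ∣ #(D.image f) := by
  obtain rfl | ⟨x₀, hx₀⟩ := D.eq_empty_or_nonempty
  · simp
  set E := {y ∈ D | g y = g x₀}
  have hD_f := card_eq_card_image_mul fun x hx => hf x hx x₀ hx₀
  have hD_g := card_eq_card_image_mul fun x hx => hg x hx x₀ hx₀
  -- a `g`-class is a union of `f`-classes, all of the same size
  have hE : #E = #(E.image f) * #{y ∈ D | f y = f x₀} := by
    refine card_eq_card_image_mul fun x hx => ?_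
    obtain ⟨hxD, hxg⟩ := mem_filter.mp hx
    rw [← hf x hxD x₀ hx₀, filter_filter]
    congr 1
    refine filter_congr fun y hy => ⟨fun h => h.2, fun h => ⟨?_, h⟩⟩
    rw [hfg y hy x hxD h, hxg]
  have ha : 0 < #{y ∈ D | f y = f x₀} := card_pos.mpr ⟨x₀, mem_filter.mpr ⟨hx₀, rfl⟩⟩
  refine ⟨#(E.image f), Nat.eq_of_mul_eq_mul_right ha ?_⟩
  rw [← hD_f, hD_g, hE, mul_assoc]

open Finset in
theorem Set.ncard_image_dvd_ncard_image {ι β γ : Type*} {D : Set ι} (hD : D.Finite)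
    {f : ι → β} {g : ι → γ}
    (hfg : ∀ x ∈ D, ∀ y ∈ D, f x = f y → g x = g y)
    (hf : ∀ x ∈ D, ∀ x' ∈ D, {y ∈ D | f y = f x}.ncard = {y ∈ D | f y = f x'}.ncard)
    (hg : ∀ x ∈ D, ∀ x' ∈ D, {y ∈ D | g y = g x}.ncard = {y ∈ D | g y = g x'}.ncard) :
    (g '' D).ncard ∣ (f '' D).ncard := by
  classical
  obtain ⟨D, rfl⟩ := hD.exists_finset_coe
  have hcoe (p : ι → Prop) [DecidablePred p] : {y ∈ (D : Set ι) | p y}.ncard = #{y ∈ D | p y} := by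
    simp [← Set.ncard_coe_finset]
  rw [← Finset.coe_image, ← Finset.coe_image, Set.ncard_coe_finset, Set.ncard_coe_finset]
  refine Finset.card_image_dvd_card_image hfg (fun x hx x' hx' => ?_) fun x hx x' hx' => ?_
  · simpa only [hcoe] using hf x hx x' hx'
  · simpa only [hcoe] using hg x hx x' hx'

namespace CoherentConfiguration

variable {Ω : Type*} (C : CoherentConfiguration Ω)

theorem eq_of_mem_of_mem {s t : Set (Ω × Ω)} (hs : s ∈ C.S) (ht : t ∈ C.S) {p : Ω × Ω}
    (hps : p ∈ s) (hpt : p ∈ t) : s = t :=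
  (C.partition p).unique ⟨hs, hps⟩ ⟨ht, hpt⟩

noncomputable def relOf (p : Ω × Ω) : Set (Ω × Ω) :=
  (C.partition p).exists.choose

theorem relOf_mem (p : Ω × Ω) : C.relOf p ∈ C.S :=
  (C.partition p).exists.choose_spec.1

theorem mem_relOf (p : Ω × Ω) : p ∈ C.relOf p :=
  (C.partition p).exists.choose_spec.2

theorem relOf_eq_iff {s : Set (Ω × Ω)} (hs : s ∈ C.S) {p : Ω × Ω} : C.relOf p = s ↔ p ∈ s :=
  ⟨fun h => h ▸ C.mem_relOf p, C.eq_of_mem_of_mem (C.relOf_mem p) hs (C.mem_relOf p)⟩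

def IsUnionOfRelations (R : Set (Ω × Ω)) : Prop :=
  ∀ s ∈ C.S, (∃ p ∈ s, p ∈ R) → s ⊆ R

variable {C}

theorem isUnionOfRelations_univ : C.IsUnionOfRelations Set.univ :=
  fun _ _ _ => Set.subset_univ _

theorem IsUnionOfRelations.inter {R Q : Set (Ω × Ω)} (hR : C.IsUnionOfRelations R)
    (hQ : C.IsUnionOfRelations Q) : C.IsUnionOfRelations (R ∩ Q) :=
  fun s hs ⟨p, hps, hpR, hpQ⟩ => Set.subset_inter (hR s hs ⟨p, hps, hpR⟩) (hQ s hs ⟨p, hps, hpQ⟩)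

theorem Compatible.isUnionOfRelations_adj {X : SimpleGraph Ω} (hX : C.Compatible X) :
    C.IsUnionOfRelations {p | X.Adj p.1 p.2} :=
  fun s hs hp _ hq => hX s hs hp _ hq

variable [Finite Ω]

theorem IsFiber.fst_mem {Δ : Set Ω} (hΔ : C.IsFiber Δ) {s : Set (Ω × Ω)} (hs : s ∈ C.S)
    {p q : Ω × Ω} (hp : p ∈ s) (hq : q ∈ s) (hpΔ : p.1 ∈ Δ) : q.1 ∈ Δ := by
  have hcount := C.regularity _ hΔ s hs s hs p hp q hq
  have hpos : 0 < {γ | (p.1, γ) ∈ {a : Ω × Ω | a.1 = a.2 ∧ a.1 ∈ Δ} ∧ (γ, p.2) ∈ s}.ncard :=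
    (Set.ncard_pos).mpr ⟨p.1, ⟨rfl, hpΔ⟩, hp⟩
  obtain ⟨γ, ⟨-, hqΔ⟩, -⟩ := (Set.ncard_pos).mp (hcount ▸ hpos)
  exact hqΔ

theorem IsFiber.snd_mem {Δ : Set Ω} (hΔ : C.IsFiber Δ) {s : Set (Ω × Ω)} (hs : s ∈ C.S)
    {p q : Ω × Ω} (hp : p ∈ s) (hq : q ∈ s) (hpΔ : p.2 ∈ Δ) : q.2 ∈ Δ :=
  hΔ.fst_mem (C.converse_mem s hs) (p := p.swap) (q := q.swap) hp hq hpΔ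

theorem IsFiber.isUnionOfRelations_fst {Δ : Set Ω} (hΔ : C.IsFiber Δ) :
    C.IsUnionOfRelations {p | p.1 ∈ Δ} :=
  fun _ hs ⟨_, hp, hpΔ⟩ _ hq => hΔ.fst_mem hs hp hq hpΔ

theorem IsFiber.isUnionOfRelations_snd {Δ : Set Ω} (hΔ : C.IsFiber Δ) :
    C.IsUnionOfRelations {p | p.2 ∈ Δ} :=
  fun _ hs ⟨_, hp, hpΔ⟩ _ hq => hΔ.snd_mem hs hp hq hpΔ

open Finset in
theorem IsUnionOfRelations.ncard_eq {R Q : Set (Ω × Ω)} (hR : C.IsUnionOfRelations R)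
    (hQ : C.IsUnionOfRelations Q) {t : Set (Ω × Ω)} (ht : t ∈ C.S) {p q : Ω × Ω}
    (hp : p ∈ t) (hq : q ∈ t) :
    {γ | (p.1, γ) ∈ R ∧ (γ, p.2) ∈ Q}.ncard = {γ | (q.1, γ) ∈ R ∧ (γ, q.2) ∈ Q}.ncard := by
  classical
  have := Fintype.ofFinite Ω
  let T : Finset (Set (Ω × Ω) × Set (Ω × Ω)) := {x | x.1 ∈ C.S ∧ x.2 ∈ C.S ∧ x.1 ⊆ R ∧ x.2 ⊆ Q}
  -- split the count according to the basic relations containing `(p.1, γ)` and `(γ, p.2)`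
  have hsplit (a : Ω × Ω) : {γ | (a.1, γ) ∈ R ∧ (γ, a.2) ∈ Q}.ncard =
      ∑ x ∈ T, {γ | (a.1, γ) ∈ x.1 ∧ (γ, a.2) ∈ x.2}.ncard := by
    simp only [Set.ncard_eq_toFinset_card', Set.toFinset_ofPred]
    rw [card_eq_sum_card_fiberwise (f := fun γ => (C.relOf (a.1, γ), C.relOf (γ, a.2)))]
    · refine sum_congr rfl fun x hx => ?_
      obtain ⟨hx₁, hx₂, hx₁R, hx₂Q⟩ := (mem_filter.mp hx).2
      congr 1
      ext γ
      simp only [mem_filter, mem_univ, true_and, Prod.ext_iff, C.relOf_eq_iff hx₁,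
        C.relOf_eq_iff hx₂]
      exact ⟨And.right, fun h => ⟨⟨hx₁R h.1, hx₂Q h.2⟩, h⟩⟩
    · intro γ hγ
      obtain ⟨hγR, hγQ⟩ := (mem_filter.mp hγ).2
      simp only [T, coe_filter, mem_univ, true_and, Set.mem_ofPred_eq]
      exact ⟨C.relOf_mem _, C.relOf_mem _, hR _ (C.relOf_mem _) ⟨_, C.mem_relOf _, hγR⟩,
        hQ _ (C.relOf_mem _) ⟨_, C.mem_relOf _, hγQ⟩⟩
  rw [hsplit p, hsplit q]
  exact sum_congr rfl fun x hx => C.regularity x.1 (mem_filter.mp hx).2.1 x.2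
    (mem_filter.mp hx).2.2.1 t ht p hp q hq

theorem IsUnionOfRelations.valency_eq {R : Set (Ω × Ω)} (hR : C.IsUnionOfRelations R)
    {t : Set (Ω × Ω)} (ht : t ∈ C.S) {p q : Ω × Ω} (hp : p ∈ t) (hq : q ∈ t) :
    {γ | (p.1, γ) ∈ R}.ncard = {γ | (q.1, γ) ∈ R}.ncard := by
  simpa only [Set.mem_univ, and_true] using hR.ncard_eq isUnionOfRelations_univ ht hp hq

theorem Compatible.neighborSet_inter_eq {X : SimpleGraph Ω} (hX : C.Compatible X) {Γ : Set Ω}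
    (hΓ : C.IsFiber Γ) {t : Set (Ω × Ω)} (ht : t ∈ C.S) {p q : Ω × Ω} (hp : p ∈ t) (hq : q ∈ t)
    (h : X.neighborSet p.1 ∩ Γ = X.neighborSet p.2 ∩ Γ) :
    X.neighborSet q.1 ∩ Γ = X.neighborSet q.2 ∩ Γ := by
  have hadj : C.IsUnionOfRelations {a | X.Adj a.2 a.1} := by
    simpa only [X.adj_comm] using hX.isUnionOfRelations_adj
  have hinto := hX.isUnionOfRelations_adj.inter hΓ.isUnionOfRelations_snd
  have hfrom := hadj.inter hΓ.isUnionOfRelations_fst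
  have hboth : (X.neighborSet q.1 ∩ Γ ∩ (X.neighborSet q.2 ∩ Γ)).ncard =
      (X.neighborSet p.1 ∩ Γ ∩ (X.neighborSet p.2 ∩ Γ)).ncard :=
    (hinto.ncard_eq hfrom ht hp hq).symm
  have hleft : (X.neighborSet q.1 ∩ Γ).ncard = (X.neighborSet p.1 ∩ Γ).ncard :=
    (hinto.valency_eq ht hp hq).symm
  have hright : (X.neighborSet q.2 ∩ Γ).ncard = (X.neighborSet p.2 ∩ Γ).ncard :=
    (hinto.valency_eq (C.converse_mem t ht) (p := p.swap) (q := q.swap) hp hq).symm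
  rw [h, Set.inter_self] at hboth
  rw [h] at hleft
  exact (Set.eq_of_subset_of_ncard_le Set.inter_subset_left (by rw [hboth, hleft])).symm.trans
    (Set.eq_of_subset_of_ncard_le Set.inter_subset_right (by rw [hboth, hright]))

theorem Compatible.isUnionOfRelations_eRel {X : SimpleGraph Ω} (hX : C.Compatible X)
    {Δ Γ : Set Ω} (hΔ : C.IsFiber Δ) (hΓ : C.IsFiber Γ) : C.IsUnionOfRelations (eRel X Δ Γ) :=
  fun _ hs ⟨_, hp, hpΔ, hpΔ', hpΓ⟩ _ hq =>
    ⟨hΔ.fst_mem hs hp hq hpΔ, hΔ.snd_mem hs hp hq hpΔ', hX.neighborSet_inter_eq hΓ hs hp hq hpΓ⟩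

theorem Compatible.ncard_eRel_class_eq {X : SimpleGraph Ω} (hX : C.Compatible X) {Δ Γ : Set Ω}
    (hΔ : C.IsFiber Δ) (hΓ : C.IsFiber Γ) {δ δ' : Ω} (hδ : δ ∈ Δ) (hδ' : δ' ∈ Δ) :
    {x ∈ Δ | X.neighborSet x ∩ Γ = X.neighborSet δ ∩ Γ}.ncard =
      {x ∈ Δ | X.neighborSet x ∩ Γ = X.neighborSet δ' ∩ Γ}.ncard := by
  have hclass {δ : Ω} (hδ : δ ∈ Δ) : {x | (δ, x) ∈ eRel X Δ Γ} =
      {x ∈ Δ | X.neighborSet x ∩ Γ = X.neighborSet δ ∩ Γ} :=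
    Set.ext fun x => ⟨fun ⟨_, hx, h⟩ => ⟨hx, h.symm⟩, fun ⟨hx, h⟩ => ⟨hδ, hx, h.symm⟩⟩
  rw [← hclass hδ, ← hclass hδ']
  exact (hX.isUnionOfRelations_eRel hΔ hΓ).valency_eq hΔ (p := (δ, δ)) (q := (δ', δ'))
    ⟨rfl, hδ⟩ ⟨rfl, hδ'⟩

end CoherentConfiguration

theorem stmt_6_general {Ω : Type*} [Fintype Ω] (X : SimpleGraph Ω)
    (C : CoherentConfiguration Ω) (hcomp : C.Compatible X)
    (Δ Γ Λ : Set Ω) (hΔ : C.IsFiber Δ) (hΓ : C.IsFiber Γ) (hΛ : C.IsFiber Λ)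
    (hsub : eRel X Δ Γ ⊆ eRel X Δ Λ) :
    numClasses X Δ Λ ∣ numClasses X Δ Γ :=
  Set.ncard_image_dvd_ncard_image Δ.toFinite
    (fun x hx y hy h => (hsub (a := (x, y)) ⟨hx, hy, h⟩).2.2)
    (fun _ hx _ hx' => hcomp.ncard_eRel_class_eq hΔ hΓ hx hx')
    (fun _ hx _ hx' => hcomp.ncard_eRel_class_eq hΔ hΛ hx hx')

theorem stmt_6 {Ω : Type*} [Fintype Ω] (X : SimpleGraph Ω) (α : Ω)
    (C : CoherentConfiguration Ω) (hcomp : C.Compatible X) (hdist : C.Distinguished α)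
    (Δ Γ Λ : Set Ω) (hΔ : C.IsFiber Δ) (hΓ : C.IsFiber Γ) (hΛ : C.IsFiber Λ)
    (hΓΔ : Disjoint Γ Δ) (hΛΔ : Disjoint Λ Δ)
    (hsub : eRel X Δ Γ ⊆ eRel X Δ Λ) :
    numClasses X Δ Λ ∣ numClasses X Δ Γ :=
  stmt_6_general X C hcomp Δ Γ Λ hΔ hΓ hΛ hsub
end
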